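/- For every x ∈ (0,1): as ε → 0⁺, w(x + iε) → i·√(x(1−x)) and w(x − iε) → −i·√(x(1−x)). -/

import Mathlib

/-!
For `ε > 0` the point `(z - 1)/z = 1 - 1/z`, `z = x + iε`, lies in the upper half-plane, and as
`ε → 0⁺` it tends to the negative real `(x - 1)/x`. The principal logarithm, and hence every
principal power, is continuous on the closed upper half-plane up to the negative real axis, where
it takes the boundary value `log |t| + π i`. So `w` extends continuously from above to `x` with
value `x · ((x - 1)/x)^{1/2} = x · i √((1 - x)/x) = i √(x(1 - x))`. The lower limit is the complex
conjugate one, since `w(z̄) = conj (w z)` wherever `(z - 1)/z` is off the negative real axis.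
-/

open Complex Metric Filter

/-- `w(z) = z·((z−1)/z)^{1/2}` with the principal square root. -/
noncomputable def wfun (z : ℂ) : ℂ := z * ((z - 1) / z) ^ ((1 : ℂ)/2)

open ComplexConjugate Topology

namespace Complex

theorem continuousWithinAt_cpow_const_of_re_neg_of_im_zero {z : ℂ} (hre : z.re < 0)
    (him : z.im = 0) (s : ℂ) : ContinuousWithinAt (· ^ s) {w : ℂ | 0 ≤ w.im} z := by
  have hz : z ≠ 0 := fun h => by simp [h] at hre
  have hexp_log : ContinuousWithinAt (fun w => exp (log w * s)) {w : ℂ | 0 ≤ w.im} z :=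
    continuous_exp.continuousAt.comp_continuousWithinAt
      ((continuousWithinAt_log_of_re_neg_of_im_zero hre him).mul continuousWithinAt_const)
  refine hexp_log.congr_of_eventuallyEq ?_ (cpow_def_of_ne_zero hz s)
  filter_upwards [nhdsWithin_le_nhds (isOpen_ne.mem_nhds hz)] with w hw
  exact cpow_def_of_ne_zero hw s

theorem im_sub_one_div (z : ℂ) : ((z - 1) / z).im = z.im / normSq z := by
  rw [div_im]
  simp only [sub_im, one_im, sub_re, one_re]
  ring

end Complex

theorem wfun_conj {z : ℂ} (hz : z.im ≠ 0) : wfun (conj z) = conj (wfun z) := by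
  have harg : ((z - 1) / z).arg ≠ Real.pi := by
    rw [Ne, arg_eq_pi_iff, im_sub_one_div]
    exact fun h => div_ne_zero hz (normSq_pos.2 (fun h0 => by simp [h0] at hz)).ne' h.2
  have hhalf : conj ((1 : ℂ) / 2) = 1 / 2 := by rw [map_div₀, map_one, map_ofNat]
  rw [wfun, wfun, map_mul, show (conj z - 1) / conj z = conj ((z - 1) / z) by simp,
    conj_cpow _ _ harg, hhalf]

theorem wfun_ofReal {x : ℝ} (hx : x ∈ Set.Ioo (0 : ℝ) 1) :
    wfun x = I * (Real.sqrt (x * (1 - x)) : ℂ) := by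
  have hratio : ((x : ℂ) - 1) / x = ((-((1 - x) / x) : ℝ) : ℂ) := by push_cast; ring
  have hq : 0 ≤ (1 - x) / x := div_nonneg (by linarith [hx.2]) hx.1.le
  have hsqrt : x * √((1 - x) / x) = √(x * (1 - x)) := by
    rw [eq_comm, Real.sqrt_eq_iff_eq_sq (mul_nonneg hx.1.le (by linarith [hx.2]))
      (mul_nonneg hx.1.le (Real.sqrt_nonneg _)), mul_pow, Real.sq_sqrt hq]
    field_simp
  have hexp : exp (Real.pi * I * (1 / 2)) = I := by
    rw [show (Real.pi : ℂ) * I * (1 / 2) = Real.pi / 2 * I by ring, exp_pi_div_two_mul_I]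
  rw [wfun, hratio, ofReal_cpow_of_nonpos (neg_nonpos.2 hq), ← ofReal_neg, neg_neg,
    show (1 : ℂ) / 2 = ((1 / 2 : ℝ) : ℂ) by norm_num, ← ofReal_cpow hq, ← Real.sqrt_eq_rpow,
    ← hsqrt]
  push_cast
  rw [hexp]
  ring

theorem continuousWithinAt_wfun {x : ℝ} (hx : x ∈ Set.Ioo (0 : ℝ) 1) :
    ContinuousWithinAt wfun {z : ℂ | 0 ≤ z.im} x := by
  have hx0 : (x : ℂ) ≠ 0 := ofReal_ne_zero.2 hx.1.ne'
  have hratio : ContinuousWithinAt (fun z : ℂ => (z - 1) / z) {z : ℂ | 0 ≤ z.im} x :=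
    ((continuousAt_id.sub continuousAt_const).div continuousAt_id hx0).continuousWithinAt
  have hmaps : Set.MapsTo (fun z : ℂ => (z - 1) / z) {z : ℂ | 0 ≤ z.im} {z : ℂ | 0 ≤ z.im} :=
    fun z hz => by
      show 0 ≤ ((z - 1) / z).im
      rw [im_sub_one_div]
      exact div_nonneg hz (normSq_nonneg z)
  have hvalue : ((x : ℂ) - 1) / x = ((x - 1) / x : ℝ) := by push_cast; ring
  have hre : (((x : ℂ) - 1) / x).re < 0 := by
    rw [hvalue, ofReal_re]
    exact div_neg_of_neg_of_pos (by linarith [hx.2]) hx.1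
  have him : (((x : ℂ) - 1) / x).im = 0 := by rw [hvalue, ofReal_im]
  exact continuousWithinAt_id.mul
    ((continuousWithinAt_cpow_const_of_re_neg_of_im_zero hre him ((1 : ℂ) / 2)).comp
      (f := fun z : ℂ => (z - 1) / z) hratio hmaps)

theorem tendsto_ofReal_add_mul_I_nhdsGT (x : ℝ) :
    Tendsto (fun ε : ℝ => (x : ℂ) + ε * I) (𝓝[>] 0) (𝓝[{z : ℂ | 0 ≤ z.im}] (x : ℂ)) := by
  have hcont : Continuous (fun ε : ℝ => (x : ℂ) + ε * I) := by fun_prop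
  refine tendsto_nhdsWithin_iff.2 ⟨?_, ?_⟩
  · exact (hcont.tendsto' 0 x (by simp)).mono_left nhdsWithin_le_nhds
  · filter_upwards [self_mem_nhdsWithin] with ε (hε : 0 < ε)
    simpa using hε.le

/-- For `x ∈ (0,1)`, as `ε → 0⁺`, `w(x + iε) → i√(x(1−x))` and
`w(x − iε) → −i√(x(1−x))`. -/
theorem stmt_10 (x : ℝ) (hx : x ∈ Set.Ioo (0:ℝ) 1) :
    Tendsto (fun ε : ℝ => wfun ((x : ℂ) + ε * I)) (nhdsWithin 0 (Set.Ioi 0))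
      (nhds (I * (Real.sqrt (x * (1 - x)) : ℂ))) ∧
    Tendsto (fun ε : ℝ => wfun ((x : ℂ) - ε * I)) (nhdsWithin 0 (Set.Ioi 0))
      (nhds (-(I * (Real.sqrt (x * (1 - x)) : ℂ)))) := by
  have upper : Tendsto (fun ε : ℝ => wfun (x + ε * I)) (𝓝[>] 0) (𝓝 (I * √(x * (1 - x)))) := by
    rw [← wfun_ofReal hx]
    exact (continuousWithinAt_wfun hx).tendsto.comp (tendsto_ofReal_add_mul_I_nhdsGT x)
  refine ⟨upper, ?_⟩
  have hconj : (fun ε : ℝ => conj (wfun (x + ε * I))) =ᶠ[𝓝[>] 0]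
      fun ε : ℝ => wfun (x - ε * I) := by
    filter_upwards [self_mem_nhdsWithin] with ε (hε : 0 < ε)
    rw [← wfun_conj (by simpa using hε.ne')]
    simp [sub_eq_add_neg]
  have hlim : conj (I * (√(x * (1 - x)) : ℂ)) = -(I * √(x * (1 - x))) := by simp
  rw [← hlim]
  exact ((continuous_conj.tendsto _).comp upper).congr' hconj
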